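/- arXiv:2006.16784 — 16 statements merged into one kernel-verified Lean document; each statement's English description precedes it below -/
import Mathlib

section
/- Let f be a submodular function on a finite ground set V, let X ⊆ V, and let x ∈ ℝ^V. Then f(Y) − x(Y) ≤ f(X) − x(X) holds for all Y ⊆ X if and only if x(j) ≤ f(j | X \ {j}) for all j ∈ X. In other words, the polyhedron ∂^f_1(X) = {x ∈ ℝ^V : f(Y) − x(Y) ≤ f(X) − x(X) for all Y ⊆ X} equals {x ∈ ℝ^V : x(j) ≤ f(j | X \ {j}) for all j ∈ X}. -/
/-- Characterization of `∂^f_1(X)`: the inequalities over all `Y ⊆ X` reduce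
to the `n` singleton inequalities `x j ≤ f(j | X \ {j})` for `j ∈ X`. -/
theorem superdifferential_subset_part_eq
    {V : Type*} [Fintype V] [DecidableEq V]
    (f : Finset V → ℝ)
    (hf : ∀ S T : Finset V, f S + f T ≥ f (S ∪ T) + f (S ∩ T))
    (X : Finset V) (x : V → ℝ) :
    (∀ Y ⊆ X, f Y - (∑ i ∈ Y, x i) ≤ f X - (∑ i ∈ X, x i)) ↔
      (∀ j ∈ X, x j ≤ f (insert j (X.erase j)) - f (X.erase j)) := by
  constructor
  · intro h j hj
    have h1 := h (X.erase j) (Finset.erase_subset _ _)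
    have he : insert j (X.erase j) = X := Finset.insert_erase hj
    rw [he]
    have hsum : ∑ i ∈ X, x i = x j + ∑ i ∈ X.erase j, x i := (Finset.add_sum_erase X x hj).symm
    linarith
  · intro h
    have key : ∀ n (Y : Finset V), Y ⊆ X → (X \ Y).card = n →
        f Y - ∑ i ∈ Y, x i ≤ f X - ∑ i ∈ X, x i := by
      intro n
      induction n with
      | zero =>
        intro Y hY hc
        have : X \ Y = ∅ := Finset.card_eq_zero.mp hc
        have hXY : Y = X := Finset.Subset.antisymm hY
          (fun a ha => by
            by_contra haY
            exact (Finset.eq_empty_iff_forall_notMem.mp this a)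
              (Finset.mem_sdiff.mpr ⟨ha, haY⟩))
        rw [hXY]
      | succ n ih =>
        intro Y hY hc
        have hne : (X \ Y).Nonempty := Finset.card_pos.mp (by omega)
        obtain ⟨j, hj⟩ := hne
        have hjX : j ∈ X := (Finset.mem_sdiff.mp hj).1
        have hjY : j ∉ Y := (Finset.mem_sdiff.mp hj).2
        have hYe : Y ⊆ X.erase j := fun a ha =>
          Finset.mem_erase.mpr ⟨fun hh => hjY (hh ▸ ha), hY ha⟩
        have hY' : insert j Y ⊆ X := Finset.insert_subset hjX hY
        have hcard : (X \ insert j Y).card = n := by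
          have : X \ insert j Y = (X \ Y).erase j := by
            ext a
            simp [Finset.mem_sdiff, Finset.mem_erase]
            tauto
          rw [this, Finset.card_erase_of_mem hj, hc]; omega
        have step := ih (insert j Y) hY' hcard
        have sub := hf (insert j Y) (X.erase j)
        have hu : insert j Y ∪ X.erase j = X := by
          apply Finset.Subset.antisymm
          · intro a ha
            rcases Finset.mem_union.mp ha with ha | ha
            · rcases Finset.mem_insert.mp ha with rfl | ha
              · exact hjX
              · exact hY ha
            · exact Finset.erase_subset _ _ ha
          · intro a ha
            by_cases hhh : a = j
            · exact Finset.mem_union_left _ (by simp [hhh])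
            · exact Finset.mem_union_right _ (Finset.mem_erase.mpr ⟨hhh, ha⟩)
        have hi : insert j Y ∩ X.erase j = Y := by
          ext a
          simp only [Finset.mem_inter, Finset.mem_insert, Finset.mem_erase]
          constructor
          · rintro ⟨rfl | ha, hne, _⟩
            · exact absurd rfl hne
            · exact ha
          · intro ha
            exact ⟨Or.inr ha, (Finset.mem_erase.mp (hYe ha)).1, hY ha⟩
        rw [hu, hi] at sub
        have hxj : x j ≤ f (insert j (X.erase j)) - f (X.erase j) := h j hjX
        rw [Finset.insert_erase hjX] at hxj
        have hsum : ∑ i ∈ insert j Y, x i = x j + ∑ i ∈ Y, x i := Finset.sum_insert hjY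
        linarith
    intro Y hY
    exact key (X \ Y).card Y hY rfl
end

section
/- Let f be a submodular function on a finite ground set V, let X ⊆ V, and let x ∈ ℝ^V. Then f(Y) − x(Y) ≤ f(X) − x(X) holds for all Y with X ⊆ Y ⊆ V if and only if x(j) ≥ f(j | X) for all j ∈ V \ X. In other words, the polyhedron ∂^f_2(X) = {x ∈ ℝ^V : f(Y) − x(Y) ≤ f(X) − x(X) for all Y ⊇ X} equals {x ∈ ℝ^V : x(j) ≥ f(j | X) for all j ∉ X}. -/
/-- Characterization of `∂^f_2(X)`: the inequalities over all `Y ⊇ X` reduce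
to the singleton inequalities `x j ≥ f(j | X)` for `j ∉ X`. -/
theorem superdifferential_superset_part_eq
    {V : Type*} [Fintype V] [DecidableEq V]
    (f : Finset V → ℝ)
    (hf : ∀ S T : Finset V, f S + f T ≥ f (S ∪ T) + f (S ∩ T))
    (X : Finset V) (x : V → ℝ) :
    (∀ Y : Finset V, X ⊆ Y → f Y - (∑ i ∈ Y, x i) ≤ f X - (∑ i ∈ X, x i)) ↔
      (∀ j ∉ X, x j ≥ f (insert j X) - f X) := by
  constructor
  · intro h j hj
    have := h (insert j X) (Finset.subset_insert j X)
    rw [Finset.sum_insert hj] at this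
    linarith
  · intro h
    suffices H : ∀ n (Y : Finset V), X ⊆ Y → (Y \ X).card = n →
        f Y - (∑ i ∈ Y, x i) ≤ f X - (∑ i ∈ X, x i) by
      intro Y hXY; exact H _ Y hXY rfl
    intro n
    induction n with
    | zero =>
      intro Y hXY hn
      have : Y = X := by
        have := Finset.card_eq_zero.mp hn
        have h2 : Y ⊆ X := fun a ha => by
          by_contra hax
          exact absurd (Finset.mem_sdiff.mpr ⟨ha, hax⟩) (by simp [this])
        exact Finset.Subset.antisymm h2 hXY
      simp [this]
    | succ n ih =>
      intro Y hXY hn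
      obtain ⟨j, hj⟩ : (Y \ X).Nonempty := Finset.card_pos.mp (by omega)
      have hjY : j ∈ Y := (Finset.mem_sdiff.mp hj).1
      have hjX : j ∉ X := (Finset.mem_sdiff.mp hj).2
      set Y' := Y.erase j with hY'
      have hXY' : X ⊆ Y' := fun a ha =>
        Finset.mem_erase.mpr ⟨fun h' => hjX (h' ▸ ha), hXY ha⟩
      have hcard : (Y' \ X).card = n := by
        have : Y' \ X = (Y \ X).erase j := by
          ext a; simp [hY', Finset.mem_erase, Finset.mem_sdiff]; tauto
        rw [this, Finset.card_erase_of_mem hj, hn]; rfl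
      have hIH := ih Y' hXY' hcard
      have hsub := hf Y' (insert j X)
      have hU : Y' ∪ insert j X = Y := by
        ext a
        simp only [Finset.mem_union, Finset.mem_insert, hY', Finset.mem_erase]
        constructor
        · rintro (⟨_, h⟩ | rfl | h)
          · exact h
          · exact hjY
          · exact hXY h
        · intro ha
          by_cases haj : a = j
          · right; left; exact haj
          · left; exact ⟨haj, ha⟩
      have hI : Y' ∩ insert j X = X := by
        ext a
        simp only [Finset.mem_inter, Finset.mem_insert, hY', Finset.mem_erase]
        constructor
        · rintro ⟨⟨haj, _⟩, rfl | h⟩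
          · exact absurd rfl haj
          · exact h
        · intro ha
          exact ⟨⟨fun h' => hjX (h' ▸ ha), hXY ha⟩, Or.inr ha⟩
      rw [hU, hI] at hsub
      have hxj := h j hjX
      have hsumY : (∑ i ∈ Y, x i) = x j + ∑ i ∈ Y', x i := by
        rw [hY', Finset.add_sum_erase _ _ hjY]
      linarith
end

section
/- Let f be a submodular function on a finite ground set V with f(∅) = 0. Then the superdifferential at the empty set, ∂^f(∅) = {x ∈ ℝ^V : f(Y) − x(Y) ≤ f(∅) − x(∅) for all Y ⊆ V}, equals {x ∈ ℝ^V : x(j) ≥ f({j}) for all j ∈ V}. -/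
theorem Finset.le_sum_singleton_of_submodular {V M : Type*} [DecidableEq V]
    [AddCommMonoid M] [PartialOrder M] [IsOrderedAddMonoid M] (f : Finset V → M)
    (hf : ∀ S T : Finset V, f S + f T ≥ f (S ∪ T) + f (S ∩ T)) (hf0 : f ∅ = 0)
    (Y : Finset V) : f Y ≤ ∑ i ∈ Y, f {i} := by
  induction Y using Finset.induction with
  | empty => simp [hf0]
  | insert a S ha ih =>
    calc f (insert a S) = f ({a} ∪ S) + f ({a} ∩ S) := by
          rw [Finset.singleton_inter_of_notMem ha, hf0, add_zero, Finset.insert_eq]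
      _ ≤ f {a} + f S := hf {a} S
      _ ≤ f {a} + ∑ i ∈ S, f {i} := add_le_add_right ih _
      _ = ∑ i ∈ insert a S, f {i} := (Finset.sum_insert (f := fun i => f {i}) ha).symm

theorem superdifferential_at_empty_general
    {V : Type*} [DecidableEq V]
    (f : Finset V → ℝ)
    (hf : ∀ S T : Finset V, f S + f T ≥ f (S ∪ T) + f (S ∩ T))
    (hf0 : f ∅ = 0) (x : V → ℝ) :
    (∀ Y : Finset V, f Y - (∑ i ∈ Y, x i) ≤ f ∅ - (∑ i ∈ (∅ : Finset V), x i)) ↔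
      (∀ j : V, x j ≥ f {j}) := by
  simp only [hf0, Finset.sum_empty, sub_zero, sub_nonpos]
  refine ⟨fun h j => by simpa using h {j}, fun h Y => ?_⟩
  calc f Y ≤ ∑ i ∈ Y, f {i} := Finset.le_sum_singleton_of_submodular f hf hf0 Y
    _ ≤ ∑ i ∈ Y, x i := Finset.sum_le_sum fun i _ => h i

/-- The superdifferential at the empty set equals
`{x : x j ≥ f {j} for all j}` when `f ∅ = 0`. -/
theorem superdifferential_at_empty
    {V : Type*} [Fintype V] [DecidableEq V]
    (f : Finset V → ℝ)
    (hf : ∀ S T : Finset V, f S + f T ≥ f (S ∪ T) + f (S ∩ T))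
    (hf0 : f ∅ = 0) (x : V → ℝ) :
    (∀ Y : Finset V, f Y - (∑ i ∈ Y, x i) ≤ f ∅ - (∑ i ∈ (∅ : Finset V), x i)) ↔
      (∀ j : V, x j ≥ f {j}) :=
  superdifferential_at_empty_general f hf hf0 x
end

section
/- Let f be a submodular function on a finite ground set V. Then the superdifferential at the ground set, ∂^f(V) = {x ∈ ℝ^V : f(Y) − x(Y) ≤ f(V) − x(V) for all Y ⊆ V}, equals {x ∈ ℝ^V : x(j) ≤ f(j | V \ {j}) for all j ∈ V}. -/
/-- The superdifferential at the ground set `V` equals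
`{x : x j ≤ f(j | V \ {j}) for all j}`. -/
theorem superdifferential_at_ground_set
    {V : Type*} [Fintype V] [DecidableEq V]
    (f : Finset V → ℝ)
    (hf : ∀ S T : Finset V, f S + f T ≥ f (S ∪ T) + f (S ∩ T))
    (x : V → ℝ) :
    (∀ Y : Finset V, f Y - (∑ i ∈ Y, x i) ≤
        f Finset.univ - (∑ i ∈ (Finset.univ : Finset V), x i)) ↔
      (∀ j : V, x j ≤ f (insert j (Finset.univ.erase j)) - f (Finset.univ.erase j)) := by
  constructor
  · intro h j
    have hins : insert j (Finset.univ.erase j) = (Finset.univ : Finset V) :=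
      Finset.insert_erase (Finset.mem_univ j)
    have h1 := h (Finset.univ.erase j)
    have hsum : ∑ i ∈ (Finset.univ : Finset V), x i
        = x j + ∑ i ∈ Finset.univ.erase j, x i :=
      (Finset.add_sum_erase _ _ (Finset.mem_univ j)).symm
    rw [hins]
    linarith
  · intro h Y
    have key : ∀ n (Y : Finset V), (Finset.univ \ Y).card = n →
        f Y - ∑ i ∈ Y, x i ≤ f Finset.univ - ∑ i ∈ Finset.univ, x i := by
      intro n
      induction n with
      | zero =>
        intro Y hY
        have hYu : Y = Finset.univ := by
          have : (Finset.univ \ Y : Finset V) = ∅ := Finset.card_eq_zero.mp hY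
          have hsub : (Finset.univ : Finset V) ⊆ Y :=
            Finset.sdiff_eq_empty_iff_subset.mp this
          exact Finset.univ_subset_iff.mp hsub
        rw [hYu]
      | succ n ih =>
        intro Y hY
        have hne : (Finset.univ \ Y).Nonempty := by
          rw [← Finset.card_pos, hY]; omega
        obtain ⟨j, hj⟩ := hne
        have hjY : j ∉ Y := (Finset.mem_sdiff.mp hj).2
        have hcard : (Finset.univ \ insert j Y).card = n := by
          have : Finset.univ \ insert j Y = (Finset.univ \ Y).erase j := by
            ext a
            simp [Finset.mem_sdiff, Finset.mem_insert, Finset.mem_erase]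
          rw [this, Finset.card_erase_of_mem hj, hY]
          omega
        have hIH := ih (insert j Y) hcard
        have hsub := hf (Finset.univ.erase j) (insert j Y)
        have hU : Finset.univ.erase j ∪ insert j Y = (Finset.univ : Finset V) := by
          apply Finset.eq_univ_of_forall
          intro a
          by_cases ha : a = j <;> simp [Finset.mem_union, ha]
        have hI : Finset.univ.erase j ∩ insert j Y = Y := by
          ext a
          by_cases ha : a = j <;>
            simp [Finset.mem_inter, Finset.mem_erase, Finset.mem_insert, ha, hjY]
        rw [hU, hI] at hsub
        have hxj := h j
        have hins : insert j (Finset.univ.erase j) = (Finset.univ : Finset V) :=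
          Finset.insert_erase (Finset.mem_univ j)
        rw [hins] at hxj
        have hxsum : ∑ i ∈ insert j Y, x i = x j + ∑ i ∈ Y, x i :=
          Finset.sum_insert hjY
        linarith
    exact key _ Y rfl
end

section
/- Let f be a submodular function on a finite ground set V, let X ⊆ V, and let x ∈ ℝ^V. If f(Y) − x(Y) ≥ f(X) − x(X) holds for all Y ⊆ X and for all Y with X ⊆ Y ⊆ V, then f(Y) − x(Y) ≥ f(X) − x(X) holds for all Y ⊆ V. That is, the subdifferential ∂_f(X) equals the intersection of the polyhedra defined by the subset inequalities and the superset inequalities alone: ∂_f(X) = ∂_f^1(X) ∩ ∂_f^2(X). -/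
/-- For a submodular `f`, the subdifferential inequalities at `X` for
arbitrary `Y` follow from those for `Y ⊆ X` and `Y ⊇ X`, i.e.
`∂_f(X) = ∂_f^1(X) ∩ ∂_f^2(X)`. -/
theorem subdifferential_eq_inter
    {V : Type*} [Fintype V] [DecidableEq V]
    (f : Finset V → ℝ)
    (hf : ∀ S T : Finset V, f S + f T ≥ f (S ∪ T) + f (S ∩ T))
    (X : Finset V) (x : V → ℝ)
    (h1 : ∀ Y ⊆ X, f Y - (∑ i ∈ Y, x i) ≥ f X - (∑ i ∈ X, x i))
    (h2 : ∀ Y : Finset V, X ⊆ Y → f Y - (∑ i ∈ Y, x i) ≥ f X - (∑ i ∈ X, x i)) :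
    ∀ Y : Finset V, f Y - (∑ i ∈ Y, x i) ≥ f X - (∑ i ∈ X, x i) := by
  intro Y
  have hsub := hf Y X
  have ha := h1 (Y ∩ X) (Finset.inter_subset_right)
  have hb := h2 (Y ∪ X) (Finset.subset_union_right)
  have hsum : (∑ i ∈ Y ∪ X, x i) + (∑ i ∈ Y ∩ X, x i)
      = (∑ i ∈ Y, x i) + (∑ i ∈ X, x i) := Finset.sum_union_inter
  linarith
end

section
/- Let f be a submodular function on a finite ground set V and let X ⊆ V. Define the vector ĝ_X ∈ ℝ^V by ĝ_X(j) = f(j | X \ {j}) for j ∈ X and ĝ_X(j) = f(j | ∅) for j ∉ X. Then ĝ_X is a supergradient of f at X, i.e., f(Y) − ĝ_X(Y) ≤ f(X) − ĝ_X(X) for all Y ⊆ V. -/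
/-!
Both sides are compared with `f (X ∩ Y)`. Going up from `X ∩ Y` to `Y` adds the elements of
`Y \ X` one at a time, and by diminishing returns each gain is at most `f(j | ∅)`. Going down from
`X` to `X ∩ Y` removes the elements of `X \ Y` one at a time, and by diminishing returns each loss
is at least `f(j | X \ {j})`. Hence `f Y - f (X ∩ Y) ≤ ĝ(Y \ X)` and
`ĝ(X \ Y) ≤ f X - f (X ∩ Y)`, which rearrange to the claim.
-/

open Finset

section

variable {V : Type*} [DecidableEq V]

def IsSubmodular (f : Finset V → ℝ) : Prop :=
  ∀ S T : Finset V, f (S ∪ T) + f (S ∩ T) ≤ f S + f T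

namespace IsSubmodular

variable {f : Finset V → ℝ}

theorem marginal_antitone (hf : IsSubmodular f) {A B : Finset V} (hAB : A ⊆ B) {j : V}
    (hj : j ∉ B) : f (insert j B) - f B ≤ f (insert j A) - f A := by
  have hunion : insert j A ∪ B = insert j B := by
    rw [insert_union, union_eq_right.mpr hAB]
  have hinter : insert j A ∩ B = A := by
    rw [insert_inter_of_notMem hj, inter_eq_left.mpr hAB]
  have := hf (insert j A) B
  rw [hunion, hinter] at this
  linarith

theorem sub_le_sum_marginal (hf : IsSubmodular f) {A C : Finset V} (hAC : A ⊆ C)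
    {s : Finset V} (hCs : Disjoint C s) :
    f (C ∪ s) - f C ≤ ∑ j ∈ s, (f (insert j A) - f A) := by
  induction s using Finset.induction_on with
  | empty => simp
  | @insert j s hjs ih =>
    rw [disjoint_insert_right] at hCs
    have hj : j ∉ C ∪ s := by simp [hCs.1, hjs]
    have hgain := hf.marginal_antitone (hAC.trans subset_union_left) hj
    rw [union_insert, sum_insert hjs]
    linarith [ih hCs.2]

theorem sum_marginal_erase_le_sub (hf : IsSubmodular f) {D s : Finset V} (hsD : s ⊆ D) :
    ∑ j ∈ s, (f D - f (D.erase j)) ≤ f D - f (D \ s) := by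
  induction s using Finset.induction_on with
  | empty => simp
  | @insert j s hjs ih =>
    rw [insert_subset_iff] at hsD
    have hloss := hf.marginal_antitone
      (erase_subset_erase j (sdiff_subset (s := D) (t := s))) (notMem_erase j D)
    rw [insert_erase hsD.1, insert_erase (mem_sdiff.mpr ⟨hsD.1, hjs⟩)] at hloss
    rw [sum_insert hjs, sdiff_insert]
    linarith [ih hsD.2]

end IsSubmodular

end

theorem grow_supergradient_general
    {V : Type*} [DecidableEq V]
    (f : Finset V → ℝ)
    (hf : ∀ S T : Finset V, f S + f T ≥ f (S ∪ T) + f (S ∩ T))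
    (X : Finset V) (g : V → ℝ)
    (hg : ∀ j : V, g j =
      if j ∈ X then f (insert j (X.erase j)) - f (X.erase j)
      else f (insert j ∅) - f ∅) :
    ∀ Y : Finset V, f Y - (∑ i ∈ Y, g i) ≤ f X - (∑ i ∈ X, g i) := by
  intro Y
  have hsub : IsSubmodular f := hf
  have hup := hsub.sub_le_sum_marginal (empty_subset (Y ∩ X)) (disjoint_sdiff_inter Y X).symm
  have hdown := hsub.sum_marginal_erase_le_sub (sdiff_subset (s := X) (t := Y))
  rw [union_comm, sdiff_union_inter] at hup
  rw [sdiff_sdiff_self_left, inter_comm] at hdown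
  have hgY : ∑ j ∈ Y \ X, g j = ∑ j ∈ Y \ X, (f (insert j ∅) - f ∅) :=
    sum_congr rfl fun j hj => by rw [hg, if_neg (mem_sdiff.mp hj).2]
  have hgX : ∑ j ∈ X \ Y, g j = ∑ j ∈ X \ Y, (f X - f (X.erase j)) :=
    sum_congr rfl fun j hj => by
      rw [hg, if_pos (mem_sdiff.mp hj).1, insert_erase (mem_sdiff.mp hj).1]
  rw [← sum_inter_add_sum_sdiff Y X, ← sum_inter_add_sum_sdiff X Y, inter_comm X Y]
  linarith

/-- The "grow" supergradient `ĝ_X`, with `ĝ_X j = f(j | X \ {j})` for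
`j ∈ X` and `ĝ_X j = f(j | ∅)` for `j ∉ X`, is a supergradient of `f` at `X`. -/
theorem grow_supergradient
    {V : Type*} [Fintype V] [DecidableEq V]
    (f : Finset V → ℝ)
    (hf : ∀ S T : Finset V, f S + f T ≥ f (S ∪ T) + f (S ∩ T))
    (X : Finset V) (g : V → ℝ)
    (hg : ∀ j : V, g j =
      if j ∈ X then f (insert j (X.erase j)) - f (X.erase j)
      else f (insert j ∅) - f ∅) :
    ∀ Y : Finset V, f Y - (∑ i ∈ Y, g i) ≤ f X - (∑ i ∈ X, g i) :=
  grow_supergradient_general f hf X g hg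
end

section
/- Let f be a submodular function on a finite ground set V and let X ⊆ V. Define the vector ǧ_X ∈ ℝ^V by ǧ_X(j) = f(j | V \ {j}) for j ∈ X and ǧ_X(j) = f(j | X) for j ∉ X. Then ǧ_X is a supergradient of f at X, i.e., f(Y) − ǧ_X(Y) ≤ f(X) − ǧ_X(X) for all Y ⊆ V. -/
open Finset

/-- The "shrink" supergradient `ǧ_X`, with `ǧ_X j = f(j | V \ {j})` for
`j ∈ X` and `ǧ_X j = f(j | X)` for `j ∉ X`, is a supergradient of `f` at `X`. -/
theorem shrink_supergradient
    {V : Type*} [Fintype V] [DecidableEq V]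
    (f : Finset V → ℝ)
    (hf : ∀ S T : Finset V, f S + f T ≥ f (S ∪ T) + f (S ∩ T))
    (X : Finset V) (g : V → ℝ)
    (hg : ∀ j : V, g j =
      if j ∈ X then f (insert j (Finset.univ.erase j)) - f (Finset.univ.erase j)
      else f (insert j X) - f X) :
    ∀ Y : Finset V, f Y - (∑ i ∈ Y, g i) ≤ f X - (∑ i ∈ X, g i) := by
  -- marginal decreasingness
  have hmar : ∀ (S : Finset V) (j : V), j ∉ S → ∀ X0 : Finset V, X0 ⊆ S →
      f (insert j S) - f S ≤ f (insert j X0) - f X0 := by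
    intro S j hj X0 hX0
    have h := hf (insert j X0) S
    have h1 : insert j X0 ∪ S = insert j S := by
      ext x
      simp only [mem_union, mem_insert]
      constructor
      · rintro (⟨h | h⟩ | h) <;> [exact Or.inl h; exact Or.inr (hX0 h); exact Or.inr h]
      · rintro (h | h) <;> [exact Or.inl (Or.inl h); exact Or.inr h]
    have h2 : insert j X0 ∩ S = X0 := by
      ext x
      simp only [mem_inter, mem_insert]
      constructor
      · rintro ⟨h | h, hs⟩
        · exact absurd (h ▸ hs) hj
        · exact h
      · intro h; exact ⟨Or.inr h, hX0 h⟩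
    rw [h1, h2] at h
    linarith
  have upper : ∀ T : Finset V, Disjoint X T →
      f (X ∪ T) ≤ f X + ∑ j ∈ T, (f (insert j X) - f X) := by
    intro T
    induction T using Finset.induction_on with
    | empty => simp
    | @insert a T ha ih =>
      intro hdis
      have hdT : Disjoint X T := hdis.mono_right (subset_insert a T)
      have haX : a ∉ X := fun h => disjoint_left.mp hdis h (mem_insert_self a T)
      have haXT : a ∉ X ∪ T := by simp [haX, ha]
      have h1 : X ∪ insert a T = insert a (X ∪ T) := by
        ext x; simp only [mem_union, mem_insert]; tauto
      have h2 := hmar (X ∪ T) a haXT X subset_union_left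
      have h3 := ih hdT
      rw [h1, Finset.sum_insert ha]
      linarith
  intro Y
  have lower : ∀ T : Finset V, Disjoint Y T →
      f Y + ∑ j ∈ T, (f (insert j (Finset.univ.erase j)) - f (Finset.univ.erase j))
        ≤ f (Y ∪ T) := by
    intro T
    induction T using Finset.induction_on with
    | empty => simp
    | @insert a T ha ih =>
      intro hdis
      have hdT : Disjoint Y T := hdis.mono_right (subset_insert a T)
      have haY : a ∉ Y := fun h => disjoint_left.mp hdis h (mem_insert_self a T)
      have haYT : a ∉ Y ∪ T := by simp [haY, ha]
      have hsub : Y ∪ T ⊆ Finset.univ.erase a := fun x hx =>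
        mem_erase.mpr ⟨fun hxa => haYT (hxa ▸ hx), mem_univ x⟩
      have h2 := hmar (Finset.univ.erase a) a (notMem_erase a _) (Y ∪ T) hsub
      have h1 : Y ∪ insert a T = insert a (Y ∪ T) := by
        ext x; simp only [mem_union, mem_insert]; tauto
      have h3 := ih hdT
      rw [h1, Finset.sum_insert ha]
      linarith
  have hU := upper (Y \ X) disjoint_sdiff
  have hL := lower (X \ Y) disjoint_sdiff
  rw [union_sdiff_self_eq_union] at hU
  rw [union_sdiff_self_eq_union, union_comm Y X] at hL
  have hsplitY : ∑ i ∈ Y ∩ X, g i + ∑ i ∈ Y \ X, g i = ∑ i ∈ Y, g i :=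
    Finset.sum_inter_add_sum_sdiff Y X g
  have hsplitX : ∑ i ∈ X ∩ Y, g i + ∑ i ∈ X \ Y, g i = ∑ i ∈ X, g i :=
    Finset.sum_inter_add_sum_sdiff X Y g
  have hYX : ∑ i ∈ Y \ X, g i = ∑ j ∈ Y \ X, (f (insert j X) - f X) := by
    refine Finset.sum_congr rfl fun j hj => ?_
    rw [hg j, if_neg (mem_sdiff.mp hj).2]
  have hXY : ∑ i ∈ X \ Y, g i
      = ∑ j ∈ X \ Y, (f (insert j (Finset.univ.erase j)) - f (Finset.univ.erase j)) := by
    refine Finset.sum_congr rfl fun j hj => ?_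
    rw [hg j, if_pos (mem_sdiff.mp hj).1]
  have hcomm : ∑ i ∈ Y ∩ X, g i = ∑ i ∈ X ∩ Y, g i := by rw [inter_comm]
  linarith
end

section
/- Let f be a submodular function on a finite ground set V and let X ⊆ V. Define the vector ḡ_X ∈ ℝ^V by ḡ_X(j) = f(j | V \ {j}) for j ∈ X and ḡ_X(j) = f(j | ∅) for j ∉ X. Then ḡ_X is a supergradient of f at X, i.e., f(Y) − ḡ_X(Y) ≤ f(X) − ḡ_X(X) for all Y ⊆ V. In particular, the superdifferential ∂^f(X) is non-empty for every X ⊆ V. -/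
section Aux

variable {V : Type*} [Fintype V] [DecidableEq V] (f : Finset V → ℝ)

lemma marg_mono (hf : ∀ S T : Finset V, f S + f T ≥ f (S ∪ T) + f (S ∩ T))
    {S T : Finset V} (hST : S ⊆ T) {j : V} (hj : j ∉ T) :
    f (insert j T) - f T ≤ f (insert j S) - f S := by
  have h := hf (insert j S) T
  have h1 : insert j S ∪ T = insert j T := by
    rw [Finset.insert_union, Finset.union_eq_right.mpr hST]
  have h2 : insert j S ∩ T = S := by
    rw [Finset.insert_inter_of_notMem hj, Finset.inter_eq_left.mpr hST]
  rw [h1, h2] at h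
  linarith

lemma step_a (hf : ∀ S T : Finset V, f S + f T ≥ f (S ∪ T) + f (S ∩ T))
    (X : Finset V) (A : Finset V) (hA : Disjoint A X) :
    f (X ∪ A) ≤ f X + ∑ j ∈ A, (f (insert j X) - f X) := by
  induction A using Finset.induction_on with
  | empty => simp
  | @insert a A ha ih =>
    have hdisj : Disjoint A X := (Finset.disjoint_insert_left.mp hA).2
    have haX : a ∉ X := (Finset.disjoint_insert_left.mp hA).1
    have haXA : a ∉ X ∪ A := by simp [haX, ha]
    have h1 : f (insert a (X ∪ A)) - f (X ∪ A) ≤ f (insert a X) - f X :=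
      marg_mono f hf Finset.subset_union_left haXA
    have h2 := ih hdisj
    have h3 : X ∪ insert a A = insert a (X ∪ A) := by
      rw [Finset.union_insert]
    rw [h3, Finset.sum_insert ha]
    linarith

lemma step_b (hf : ∀ S T : Finset V, f S + f T ≥ f (S ∪ T) + f (S ∩ T))
    (U : Finset V) (A : Finset V) (hA : A ⊆ U) :
    ∑ j ∈ A, (f U - f (U.erase j)) ≤ f U - f (U \ A) := by
  induction A using Finset.induction_on with
  | empty => simp
  | @insert a A ha ih =>
    have hAU : A ⊆ U := (Finset.insert_subset_iff.mp hA).2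
    have haU : a ∈ U := (Finset.insert_subset_iff.mp hA).1
    have h2 := ih hAU
    have haUA : a ∈ U \ A := Finset.mem_sdiff.mpr ⟨haU, ha⟩
    have h3 : U \ insert a A = (U \ A).erase a := by
      ext x; simp [Finset.mem_erase, Finset.mem_sdiff]; tauto
    have hsub : (U \ A).erase a ⊆ U.erase a :=
      Finset.erase_subset_erase a (Finset.sdiff_subset)
    have hna : a ∉ U.erase a := Finset.notMem_erase a U
    have h4 := marg_mono f hf hsub hna
    rw [Finset.insert_erase haUA, Finset.insert_erase haU] at h4
    rw [Finset.sum_insert ha, h3]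
    linarith

end Aux

/-- The supergradient `ḡ_X`, with `ḡ_X j = f(j | V \ {j})` for `j ∈ X` and
`ḡ_X j = f(j | ∅)` for `j ∉ X`, is a supergradient of `f` at `X`; in particular the
superdifferential `∂^f(X)` is non-empty at every `X`. -/
theorem bar_supergradient_and_superdifferential_nonempty
    {V : Type*} [Fintype V] [DecidableEq V]
    (f : Finset V → ℝ)
    (hf : ∀ S T : Finset V, f S + f T ≥ f (S ∪ T) + f (S ∩ T))
    (X : Finset V) (g : V → ℝ)
    (hg : ∀ j : V, g j =
      if j ∈ X then f (insert j (Finset.univ.erase j)) - f (Finset.univ.erase j)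
      else f (insert j ∅) - f ∅) :
    (∀ Y : Finset V, f Y - (∑ i ∈ Y, g i) ≤ f X - (∑ i ∈ X, g i)) ∧
      {y : V → ℝ | ∀ Y : Finset V,
        f Y - (∑ i ∈ Y, y i) ≤ f X - (∑ i ∈ X, y i)}.Nonempty := by
  have main : ∀ Y : Finset V, f Y - (∑ i ∈ Y, g i) ≤ f X - (∑ i ∈ X, g i) := by
    intro Y
    set U := X ∪ Y with hU
    -- step a: f U ≤ f X + ∑_{j ∈ Y \ X} (f (insert j X) - f X)
    have ha : f U ≤ f X + ∑ j ∈ Y \ X, (f (insert j X) - f X) := by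
      have := step_a f hf X (Y \ X) (Finset.sdiff_disjoint)
      rwa [Finset.union_sdiff_self_eq_union] at this
    have hb : ∑ j ∈ X \ Y, (f U - f (U.erase j)) ≤ f U - f Y := by
      have hsub : X \ Y ⊆ U := Finset.sdiff_subset.trans Finset.subset_union_left
      have := step_b f hf U (X \ Y) hsub
      have heq : U \ (X \ Y) = Y := by
        ext x; simp [hU, Finset.mem_sdiff, Finset.mem_union]; tauto
      rwa [heq] at this
    -- termwise bounds
    have hYX : ∀ j ∈ Y \ X, f (insert j X) - f X ≤ g j := by
      intro j hj
      have hjX : j ∉ X := (Finset.mem_sdiff.mp hj).2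
      have h := marg_mono f hf (Finset.empty_subset X) hjX
      rw [hg j, if_neg hjX]
      linarith
    have hXY : ∀ j ∈ X \ Y, g j ≤ f U - f (U.erase j) := by
      intro j hj
      have hjX : j ∈ X := (Finset.mem_sdiff.mp hj).1
      have hjU : j ∈ U := Finset.mem_union_left _ hjX
      have hsub : U.erase j ⊆ Finset.univ.erase j :=
        Finset.erase_subset_erase j (Finset.subset_univ U)
      have hna : j ∉ Finset.univ.erase j := Finset.notMem_erase j _
      have h := marg_mono f hf hsub hna
      rw [Finset.insert_erase hjU] at h
      rw [hg j, if_pos hjX]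
      linarith
    have hsum1 : ∑ j ∈ Y \ X, (f (insert j X) - f X) ≤ ∑ j ∈ Y \ X, g j :=
      Finset.sum_le_sum hYX
    have hsum2 : ∑ j ∈ X \ Y, g j ≤ ∑ j ∈ X \ Y, (f U - f (U.erase j)) :=
      Finset.sum_le_sum hXY
    -- sum decomposition
    have hY : ∑ i ∈ Y ∩ X, g i + ∑ i ∈ Y \ X, g i = ∑ i ∈ Y, g i :=
      Finset.sum_inter_add_sum_sdiff Y X g
    have hX : ∑ i ∈ X ∩ Y, g i + ∑ i ∈ X \ Y, g i = ∑ i ∈ X, g i :=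
      Finset.sum_inter_add_sum_sdiff X Y g
    have hXYcomm : ∑ i ∈ Y ∩ X, g i = ∑ i ∈ X ∩ Y, g i := by
      rw [Finset.inter_comm]
    linarith
  exact ⟨main, ⟨g, main⟩⟩
end

section
/- Let f be a submodular function on a finite ground set V. Then for all X, Y ⊆ V: f(Y) ≤ f(X) − Σ_{j ∈ X \ Y} f(j | X \ {j}) + Σ_{j ∈ Y \ X} f(j | X ∩ Y). -/
private lemma dim_ret {V : Type*} [DecidableEq V] (f : Finset V → ℝ)
    (hf : ∀ S T : Finset V, f S + f T ≥ f (S ∪ T) + f (S ∩ T))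
    {A B : Finset V} (hAB : A ⊆ B) {j : V} (hj : j ∉ B) :
    f (insert j B) - f B ≤ f (insert j A) - f A := by
  have h := hf (insert j A) B
  have h1 : insert j A ∪ B = insert j B := by
    rw [Finset.insert_union, Finset.union_eq_right.mpr hAB]
  have h2 : insert j A ∩ B = A := by
    rw [Finset.insert_inter_of_notMem hj, Finset.inter_eq_left.mpr hAB]
  rw [h1, h2] at h
  linarith

private lemma tele_up {V : Type*} [DecidableEq V] (f : Finset V → ℝ)
    (hf : ∀ S T : Finset V, f S + f T ≥ f (S ∪ T) + f (S ∩ T))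
    (A : Finset V) :
    ∀ D : Finset V, Disjoint A D →
      f (A ∪ D) - f A ≤ ∑ j ∈ D, (f (insert j A) - f A) := by
  intro D
  induction D using Finset.induction_on with
  | empty => simp
  | @insert k D' hk ih =>
    intro hdisj
    have hdisj' : Disjoint A D' := hdisj.mono_right (Finset.subset_insert _ _)
    have hkA : k ∉ A := by
      intro hmem
      exact (Finset.disjoint_left.mp hdisj hmem) (Finset.mem_insert_self _ _)
    have hkAD : k ∉ A ∪ D' := by simp [hkA, hk]
    have h1 : f (insert k (A ∪ D')) - f (A ∪ D') ≤ f (insert k A) - f A :=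
      dim_ret f hf Finset.subset_union_left hkAD
    have h2 := ih hdisj'
    have hu : A ∪ insert k D' = insert k (A ∪ D') := by
      rw [Finset.union_insert]
    rw [hu, Finset.sum_insert hk]
    linarith

private lemma tele_down {V : Type*} [DecidableEq V] (f : Finset V → ℝ)
    (hf : ∀ S T : Finset V, f S + f T ≥ f (S ∪ T) + f (S ∩ T))
    (A : Finset V) :
    ∀ D : Finset V, Disjoint A D →
      ∑ j ∈ D, (f (A ∪ D) - f ((A ∪ D).erase j)) ≤ f (A ∪ D) - f A := by
  intro D
  induction D using Finset.induction_on with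
  | empty => simp
  | @insert k D' hk ih =>
    intro hdisj
    have hdisj' : Disjoint A D' := hdisj.mono_right (Finset.subset_insert _ _)
    have hkA : k ∉ A := by
      intro hmem
      exact (Finset.disjoint_left.mp hdisj hmem) (Finset.mem_insert_self _ _)
    have hkAD : k ∉ A ∪ D' := by simp [hkA, hk]
    set S' : Finset V := A ∪ D' with hS'
    have hu : A ∪ insert k D' = insert k S' := by rw [Finset.union_insert]
    rw [hu, Finset.sum_insert hk]
    have hErase : (insert k S').erase k = S' := Finset.erase_insert hkAD
    have hterm : ∀ j ∈ D', f (insert k S') - f ((insert k S').erase j)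
        ≤ f S' - f (S'.erase j) := by
      intro j hj
      have hjS' : j ∈ S' := Finset.mem_union_right _ hj
      have hjk : j ≠ k := by rintro rfl; exact hk hj
      have hsub : S'.erase j ⊆ (insert k S').erase j :=
        Finset.erase_subset_erase _ (Finset.subset_insert _ _)
      have hjnot : j ∉ (insert k S').erase j := Finset.notMem_erase _ _
      have := dim_ret f hf hsub hjnot
      rwa [Finset.insert_erase (Finset.mem_insert_of_mem hjS'),
        Finset.insert_erase hjS'] at this
    have hsum : ∑ j ∈ D', (f (insert k S') - f ((insert k S').erase j))
        ≤ ∑ j ∈ D', (f S' - f (S'.erase j)) := Finset.sum_le_sum hterm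
    have h2 := ih hdisj'
    rw [hErase]
    linarith

/-- Nemhauser–Wolsey–Fisher bound:
`f(Y) ≤ f(X) − Σ_{j ∈ X \ Y} f(j | X \ {j}) + Σ_{j ∈ Y \ X} f(j | X ∩ Y)`. -/
theorem submodular_upper_bound_one
    {V : Type*} [Fintype V] [DecidableEq V]
    (f : Finset V → ℝ)
    (hf : ∀ S T : Finset V, f S + f T ≥ f (S ∪ T) + f (S ∩ T)) :
    ∀ X Y : Finset V,
      f Y ≤ f X
        - (∑ j ∈ X \ Y, (f (insert j (X.erase j)) - f (X.erase j)))
        + (∑ j ∈ Y \ X, (f (insert j (X ∩ Y)) - f (X ∩ Y))) := by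
  intro X Y
  have hdisj1 : Disjoint (X ∩ Y) (Y \ X) := by
    apply Finset.disjoint_left.mpr
    intro a ha hb
    exact (Finset.mem_sdiff.mp hb).2 (Finset.mem_inter.mp ha).1
  have hdisj2 : Disjoint (X ∩ Y) (X \ Y) := by
    apply Finset.disjoint_left.mpr
    intro a ha hb
    exact (Finset.mem_sdiff.mp hb).2 (Finset.mem_inter.mp ha).2
  have hY : X ∩ Y ∪ Y \ X = Y := by
    ext a; simp; tauto
  have hX : X ∩ Y ∪ X \ Y = X := by ext a; simp; tauto
  have h1 := tele_up f hf (X ∩ Y) (Y \ X) hdisj1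
  rw [hY] at h1
  have h2 := tele_down f hf (X ∩ Y) (X \ Y) hdisj2
  rw [hX] at h2
  have hrw : ∑ j ∈ X \ Y, (f (insert j (X.erase j)) - f (X.erase j))
      = ∑ j ∈ X \ Y, (f X - f (X.erase j)) := by
    apply Finset.sum_congr rfl
    intro j hj
    rw [Finset.insert_erase (Finset.mem_sdiff.mp hj).1]
  rw [hrw]
  linarith
end

section
/- Let f be a submodular function on a finite ground set V. Then for all X, Y ⊆ V: f(Y) ≤ f(X) − Σ_{j ∈ X \ Y} f(j | (X ∪ Y) \ {j}) + Σ_{j ∈ Y \ X} f(j | X). -/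
/-- Nemhauser–Wolsey–Fisher bound:
`f(Y) ≤ f(X) − Σ_{j ∈ X \ Y} f(j | (X ∪ Y) \ {j}) + Σ_{j ∈ Y \ X} f(j | X)`. -/
theorem submodular_upper_bound_two
    {V : Type*} [Fintype V] [DecidableEq V]
    (f : Finset V → ℝ)
    (hf : ∀ S T : Finset V, f S + f T ≥ f (S ∪ T) + f (S ∩ T)) :
    ∀ X Y : Finset V,
      f Y ≤ f X
        - (∑ j ∈ X \ Y, (f (insert j ((X ∪ Y).erase j)) - f ((X ∪ Y).erase j)))
        + (∑ j ∈ Y \ X, (f (insert j X) - f X)) := by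
  have marg : ∀ A B : Finset V, ∀ j : V, A ⊆ B → j ∉ B →
      f (insert j B) - f B ≤ f (insert j A) - f A := by
    intro A B j hAB hj
    have h := hf (insert j A) B
    have hU : insert j A ∪ B = insert j B := by
      ext x
      simp only [Finset.mem_union, Finset.mem_insert]
      constructor
      · rintro (⟨rfl | hx⟩ | hx)
        · exact Or.inl rfl
        · exact Or.inr (hAB hx)
        · exact Or.inr hx
      · rintro (rfl | hx)
        · exact Or.inl (Or.inl rfl)
        · exact Or.inr hx
    have hI : insert j A ∩ B = A := by
      ext x
      simp only [Finset.mem_inter, Finset.mem_insert]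
      constructor
      · rintro ⟨rfl | hx, hxB⟩
        · exact absurd hxB hj
        · exact hx
      · intro hx; exact ⟨Or.inr hx, hAB hx⟩
    rw [hU, hI] at h
    linarith
  intro X Y
  have lem1 : ∀ D : Finset V, Disjoint D X →
      f (X ∪ D) ≤ f X + ∑ j ∈ D, (f (insert j X) - f X) := by
    intro D
    induction D using Finset.induction_on with
    | empty => simp
    | @insert a s ha ih =>
      intro hdisj
      have hdisj' : Disjoint s X :=
        (Finset.disjoint_insert_left.mp hdisj).2
      have haX : a ∉ X := (Finset.disjoint_insert_left.mp hdisj).1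
      have haXs : a ∉ X ∪ s := by
        simp [Finset.mem_union, haX, ha]
      have hXs : X ∪ insert a s = insert a (X ∪ s) := by
        ext x; simp [Finset.mem_union, Finset.mem_insert]
      have h1 := marg X (X ∪ s) a (Finset.subset_union_left) haXs
      have h2 := ih hdisj'
      rw [Finset.sum_insert ha, hXs]
      linarith
  have lem2 : ∀ D : Finset V, D ⊆ X \ Y →
      f Y + ∑ j ∈ D, (f (insert j ((X ∪ Y).erase j)) - f ((X ∪ Y).erase j))
        ≤ f (Y ∪ D) := by
    intro D
    induction D using Finset.induction_on with
    | empty => simp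
    | @insert a s ha ih =>
      intro hsub
      have haXY : a ∈ X \ Y := hsub (Finset.mem_insert_self a s)
      have haY : a ∉ Y := (Finset.mem_sdiff.mp haXY).2
      have hs : s ⊆ X \ Y := fun x hx => hsub (Finset.mem_insert_of_mem hx)
      have hsubA : Y ∪ s ⊆ (X ∪ Y).erase a := by
        intro x hx
        rcases Finset.mem_union.mp hx with hxY | hxs
        · refine Finset.mem_erase.mpr ⟨?_, Finset.mem_union_right _ hxY⟩
          rintro rfl; exact haY hxY
        · refine Finset.mem_erase.mpr ⟨?_, Finset.mem_union_left _
            (Finset.mem_sdiff.mp (hs hxs)).1⟩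
          rintro rfl; exact ha hxs
      have h1 := marg (Y ∪ s) ((X ∪ Y).erase a) a hsubA (Finset.notMem_erase a _)
      have h2 := ih hs
      have hYs : Y ∪ insert a s = insert a (Y ∪ s) := by
        ext x; simp [Finset.mem_union, Finset.mem_insert]
      rw [Finset.sum_insert ha, hYs]
      linarith
  have h2 := lem2 (X \ Y) (Finset.Subset.refl _)
  have hunion : Y ∪ (X \ Y) = X ∪ Y := by
    ext x; simp [Finset.mem_union, Finset.mem_sdiff]; tauto
  rw [hunion] at h2
  have h1 := lem1 (Y \ X) (Finset.sdiff_disjoint)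
  have hunion2 : X ∪ (Y \ X) = X ∪ Y := by
    ext x; simp [Finset.mem_union, Finset.mem_sdiff]
  rw [hunion2] at h1
  linarith
end

section
/- Let f be a submodular function on a finite ground set V and let X ⊆ V. If a vector x ∈ ℝ^V satisfies x(j) ≤ f(j | X \ {j}) for all j ∈ X and x(j) ≥ f(j | ∅) for all j ∉ X, then x is a supergradient of f at X, i.e., f(Y) − x(Y) ≤ f(X) − x(X) for all Y ⊆ V. (This polyhedron is an inner bound of the superdifferential ∂^f(X).) -/
lemma aux_remove {V : Type*} [DecidableEq V]
    (f : Finset V → ℝ)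
    (hf : ∀ S T : Finset V, f S + f T ≥ f (S ∪ T) + f (S ∩ T))
    (X : Finset V) :
    ∀ A : Finset V, A ⊆ X →
      f (X \ A) + (∑ j ∈ A, (f (insert j (X.erase j)) - f (X.erase j))) ≤ f X := by
  intro A
  induction A using Finset.induction with
  | empty => intro _; simp
  | @insert a A ha ih =>
    intro hsub
    have haX : a ∈ X := hsub (Finset.mem_insert_self a A)
    have hAX : A ⊆ X := (Finset.insert_subset_iff.mp hsub).2
    have hsm := hf (X \ A) (X.erase a)
    have hu : (X \ A) ∪ X.erase a = X := by
      apply Finset.Subset.antisymm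
      · exact Finset.union_subset (Finset.sdiff_subset) (Finset.erase_subset _ _)
      · intro y hy
        by_cases hya : y = a
        · exact Finset.mem_union_left _ (Finset.mem_sdiff.mpr ⟨hy, hya ▸ ha⟩)
        · exact Finset.mem_union_right _ (Finset.mem_erase.mpr ⟨hya, hy⟩)
    have hi : (X \ A) ∩ X.erase a = X \ insert a A := by
      ext y
      simp only [Finset.mem_inter, Finset.mem_sdiff, Finset.mem_erase,
        Finset.mem_insert]
      tauto
    rw [hu, hi] at hsm
    rw [Finset.sum_insert ha, Finset.insert_erase haX]
    linarith [ih hAX]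

lemma aux_add {V : Type*} [DecidableEq V]
    (f : Finset V → ℝ)
    (hf : ∀ S T : Finset V, f S + f T ≥ f (S ∪ T) + f (S ∩ T)) :
    ∀ B : Finset V, ∀ S : Finset V, Disjoint B S →
      f (S ∪ B) ≤ f S + ∑ j ∈ B, (f (insert j ∅) - f ∅) := by
  intro B
  induction B using Finset.induction with
  | empty => intro S _; simp
  | @insert a B ha ih =>
    intro S hdisj
    have hdB : Disjoint B S := (Finset.disjoint_insert_left.mp hdisj).2
    have haS : a ∉ S := (Finset.disjoint_insert_left.mp hdisj).1
    have haSB : a ∉ S ∪ B := by simp [haS, ha]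
    have hsm := hf (S ∪ B) {a}
    have hi : (S ∪ B) ∩ {a} = ∅ := by
      rw [Finset.inter_comm, Finset.singleton_inter_of_notMem haSB]
    rw [hi] at hsm
    have hu : S ∪ insert a B = (S ∪ B) ∪ {a} := by
      ext y; simp
    rw [Finset.sum_insert ha, hu]
    have := ih S hdB
    have h1 : f {a} = f (insert a (∅ : Finset V)) := by simp
    linarith [hsm]

/-- Inner bound `∂^f_{i,1}(X)`: if `x j ≤ f(j | X \ {j})` for `j ∈ X` and
`x j ≥ f(j | ∅)` for `j ∉ X`, then `x` is a supergradient of `f` at `X`. -/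
theorem inner_bound_one_supergradient
    {V : Type*} [Fintype V] [DecidableEq V]
    (f : Finset V → ℝ)
    (hf : ∀ S T : Finset V, f S + f T ≥ f (S ∪ T) + f (S ∩ T))
    (X : Finset V) (x : V → ℝ)
    (h1 : ∀ j ∈ X, x j ≤ f (insert j (X.erase j)) - f (X.erase j))
    (h2 : ∀ j ∉ X, x j ≥ f (insert j ∅) - f ∅) :
    ∀ Y : Finset V, f Y - (∑ i ∈ Y, x i) ≤ f X - (∑ i ∈ X, x i) := by
  intro Y
  have hXY : X \ (X \ Y) = X ∩ Y := Finset.sdiff_sdiff_self_left X Y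
  have hA := aux_remove f hf X (X \ Y) Finset.sdiff_subset
  rw [hXY] at hA
  have hdisj : Disjoint (Y \ X) (X ∩ Y) := by
    apply Finset.disjoint_left.mpr
    intro y hy hy'
    exact (Finset.mem_sdiff.mp hy).2 (Finset.mem_inter.mp hy').1
  have hB := aux_add f hf (Y \ X) (X ∩ Y) hdisj
  have hYeq : (X ∩ Y) ∪ (Y \ X) = Y := by
    ext y; simp; tauto
  rw [hYeq] at hB
  -- sum decompositions
  have hsY : ∑ i ∈ Y, x i = ∑ i ∈ X ∩ Y, x i + ∑ i ∈ Y \ X, x i := by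
    rw [← Finset.sum_union (by
      apply Finset.disjoint_left.mpr
      intro y hy hy'
      exact (Finset.mem_sdiff.mp hy').2 (Finset.mem_inter.mp hy).1), hYeq]
  have hsX : ∑ i ∈ X, x i = ∑ i ∈ X ∩ Y, x i + ∑ i ∈ X \ Y, x i := by
    rw [← Finset.sum_union]
    · congr 1
      ext y; simp; tauto
    · apply Finset.disjoint_left.mpr
      intro y hy hy'
      exact (Finset.mem_sdiff.mp hy').2 (Finset.mem_inter.mp hy).2
  have hx1 : ∑ j ∈ X \ Y, x j ≤ ∑ j ∈ X \ Y, (f (insert j (X.erase j)) - f (X.erase j)) := by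
    apply Finset.sum_le_sum
    intro j hj
    exact h1 j (Finset.mem_sdiff.mp hj).1
  have hx2 : ∑ j ∈ Y \ X, (f (insert j ∅) - f ∅) ≤ ∑ j ∈ Y \ X, x j := by
    apply Finset.sum_le_sum
    intro j hj
    exact h2 j (Finset.mem_sdiff.mp hj).2
  linarith
end

section
/- Let f be a submodular function on a finite ground set V and let X ⊆ V. If a vector x ∈ ℝ^V satisfies x(j) ≤ f(j | V \ {j}) for all j ∈ X and x(j) ≥ f(j | X) for all j ∉ X, then x is a supergradient of f at X, i.e., f(Y) − x(Y) ≤ f(X) − x(X) for all Y ⊆ V. (This polyhedron is an inner bound of the superdifferential ∂^f(X).) -/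
open Finset

/-- Inner bound `∂^f_{i,2}(X)`: if `x j ≤ f(j | V \ {j})` for `j ∈ X` and
`x j ≥ f(j | X)` for `j ∉ X`, then `x` is a supergradient of `f` at `X`. -/
theorem inner_bound_two_supergradient
    {V : Type*} [Fintype V] [DecidableEq V]
    (f : Finset V → ℝ)
    (hf : ∀ S T : Finset V, f S + f T ≥ f (S ∪ T) + f (S ∩ T))
    (X : Finset V) (x : V → ℝ)
    (h1 : ∀ j ∈ X, x j ≤ f (insert j (Finset.univ.erase j)) - f (Finset.univ.erase j))
    (h2 : ∀ j ∉ X, x j ≥ f (insert j X) - f X) :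
    ∀ Y : Finset V, f Y - (∑ i ∈ Y, x i) ≤ f X - (∑ i ∈ X, x i) := by
  intro Y
  -- lower bound on marginals: f(j|A) ≥ f(j|V\{j}) for j ∉ A
  have marg_lower : ∀ (j : V) (A : Finset V), j ∉ A →
      f Finset.univ - f (Finset.univ.erase j) ≤ f (insert j A) - f A := by
    intro j A hj
    have h := hf (insert j A) (Finset.univ.erase j)
    have hu : insert j A ∪ Finset.univ.erase j = Finset.univ := by
      ext a
      by_cases ha : a = j <;> simp [ha]
    have hi : insert j A ∩ Finset.univ.erase j = A := by
      ext a
      by_cases ha : a = j <;> simp [ha, hj]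
    rw [hu, hi] at h
    linarith
  -- upper bound on marginals: f(j|B) ≤ f(j|X) for j ∉ B, X ⊆ B... via submodularity directly
  -- Lemma A: f(X ∪ S) ≤ f X + ∑_{j∈S} f(j|X), for S disjoint from X
  have lemA : ∀ S : Finset V, Disjoint S X →
      f (X ∪ S) ≤ f X + ∑ j ∈ S, (f (insert j X) - f X) := by
    intro S
    induction S using Finset.induction_on with
    | empty => simp
    | @insert a S ha ih =>
      intro hdisj
      have haX : a ∉ X := by
        intro h
        exact (Finset.disjoint_left.mp hdisj (Finset.mem_insert_self a S)) h
      have hSX : Disjoint S X := hdisj.mono_left (Finset.subset_insert a S)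
      have h := hf (insert a X) (X ∪ S)
      have hu : insert a X ∪ (X ∪ S) = X ∪ insert a S := by
        ext b
        simp only [Finset.mem_union, Finset.mem_insert]
        tauto
      have hi : insert a X ∩ (X ∪ S) = X := by
        ext b
        simp only [Finset.mem_inter, Finset.mem_insert, Finset.mem_union]
        constructor
        · rintro ⟨rfl | hbX, hb | hb⟩
          · exact absurd hb haX
          · exact absurd hb ha
          · exact hbX
          · exact hbX
        · tauto
      rw [hu, hi] at h
      rw [Finset.sum_insert ha]
      have := ih hSX
      linarith
  -- Lemma B: f(Y ∪ T) ≥ f Y + ∑_{j∈T} (f univ - f(univ \ j)), for T disjoint from Y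
  have lemB : ∀ T : Finset V, Disjoint T Y →
      f Y + ∑ j ∈ T, (f Finset.univ - f (Finset.univ.erase j)) ≤ f (Y ∪ T) := by
    intro T
    induction T using Finset.induction_on with
    | empty => simp
    | @insert a T ha ih =>
      intro hdisj
      have haY : a ∉ Y := by
        intro h
        exact (Finset.disjoint_left.mp hdisj (Finset.mem_insert_self a T)) h
      have hTY : Disjoint T Y := hdisj.mono_left (Finset.subset_insert a T)
      have haYT : a ∉ Y ∪ T := by simp [haY, ha]
      have h := marg_lower a (Y ∪ T) haYT
      have hu : Y ∪ insert a T = insert a (Y ∪ T) := Finset.union_insert a Y T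
      rw [hu, Finset.sum_insert ha]
      have := ih hTY
      linarith
  -- combine
  have hA := lemA (Y \ X) (Finset.sdiff_disjoint)
  have hB := lemB (X \ Y) (Finset.sdiff_disjoint)
  have hYX : Y ∪ (X \ Y) = X ∪ (Y \ X) := by
    ext b
    simp only [Finset.mem_union, Finset.mem_sdiff]
    tauto
  rw [hYX] at hB
  -- bound sums with h1, h2
  have hs2 : ∑ j ∈ Y \ X, (f (insert j X) - f X) ≤ ∑ j ∈ Y \ X, x j := by
    apply Finset.sum_le_sum
    intro j hj
    exact h2 j (Finset.mem_sdiff.mp hj).2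
  have hs1 : ∑ j ∈ X \ Y, x j ≤ ∑ j ∈ X \ Y, (f Finset.univ - f (Finset.univ.erase j)) := by
    apply Finset.sum_le_sum
    intro j hj
    have hjX := (Finset.mem_sdiff.mp hj).1
    have := h1 j hjX
    rwa [Finset.insert_erase (Finset.mem_univ j)] at this
  -- sum decompositions
  have hsY : ∑ i ∈ Y, x i = ∑ i ∈ Y ∩ X, x i + ∑ i ∈ Y \ X, x i :=
    (Finset.sum_inter_add_sum_sdiff Y X x).symm
  have hsX : ∑ i ∈ X, x i = ∑ i ∈ X ∩ Y, x i + ∑ i ∈ X \ Y, x i :=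
    (Finset.sum_inter_add_sum_sdiff X Y x).symm
  have hIC : Y ∩ X = X ∩ Y := Finset.inter_comm Y X
  rw [hsY, hsX, hIC]
  linarith
end

section
/- Let f be a submodular function on a finite ground set V and let A ⊆ V. If f(j | A \ {j}) ≥ 0 for all j ∈ A and f(j | A) ≤ 0 for all j ∉ A (i.e., the zero vector lies in the outer bound ∂^f_{△(1,1)}(A) = ∂^f_1(A) ∩ ∂^f_2(A) of the superdifferential), then A is a lattice local maximum of f: f(A) ≥ f(B) for every B with A ⊆ B ⊆ V, and f(A) ≥ f(C) for every C ⊆ A. -/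
/-- If `0 ∈ ∂^f_{△(1,1)}(A)`, i.e. `f(j | A \ {j}) ≥ 0` for `j ∈ A` and
`f(j | A) ≤ 0` for `j ∉ A`, then `A` is a lattice local maximum of `f`. -/
theorem zero_in_outer_bound_implies_local_max
    {V : Type*} [Fintype V] [DecidableEq V]
    (f : Finset V → ℝ)
    (hf : ∀ S T : Finset V, f S + f T ≥ f (S ∪ T) + f (S ∩ T))
    (A : Finset V)
    (h1 : ∀ j ∈ A, f (insert j (A.erase j)) - f (A.erase j) ≥ 0)
    (h2 : ∀ j ∉ A, f (insert j A) - f A ≤ 0) :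
    (∀ B : Finset V, A ⊆ B → f A ≥ f B) ∧ (∀ C ⊆ A, f A ≥ f C) := by
  have key : ∀ S T : Finset V, S ⊆ T → ∀ j ∉ T,
      f (insert j S) - f S ≥ f (insert j T) - f T := by
    intro S T hST j hj
    have h := hf (insert j S) T
    have hu : insert j S ∪ T = insert j T := by
      ext x
      simp only [Finset.mem_union, Finset.mem_insert]
      constructor
      · rintro (⟨rfl | hx⟩ | hx)
        · exact Or.inl rfl
        · exact Or.inr (hST hx)
        · exact Or.inr hx
      · rintro (rfl | hx)
        · exact Or.inl (Or.inl rfl)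
        · exact Or.inr hx
    have hi : insert j S ∩ T = S := by
      ext x
      simp only [Finset.mem_inter, Finset.mem_insert]
      constructor
      · rintro ⟨rfl | hx, hxT⟩
        · exact absurd hxT hj
        · exact hx
      · intro hx; exact ⟨Or.inr hx, hST hx⟩
    rw [hu, hi] at h
    linarith
  constructor
  · have main : ∀ n (B : Finset V), A ⊆ B → (B \ A).card = n → f A ≥ f B := by
      intro n
      induction n with
      | zero =>
        intro B hAB h0
        have hBA : B = A :=
          Finset.Subset.antisymm
            (Finset.sdiff_eq_empty_iff_subset.mp (Finset.card_eq_zero.mp h0)) hAB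
        simp [hBA]
      | succ n ih =>
        intro B hAB hc
        obtain ⟨j, hj⟩ : (B \ A).Nonempty := Finset.card_pos.mp (by omega)
        have hjB : j ∈ B := (Finset.mem_sdiff.mp hj).1
        have hjA : j ∉ A := (Finset.mem_sdiff.mp hj).2
        have hsub : A ⊆ B.erase j := fun x hx =>
          Finset.mem_erase.mpr ⟨fun h => hjA (h ▸ hx), hAB hx⟩
        have hcard : (B.erase j \ A).card = n := by
          have : B.erase j \ A = (B \ A).erase j := by
            ext x
            simp only [Finset.mem_sdiff, Finset.mem_erase]
            tauto
          rw [this, Finset.card_erase_of_mem hj, hc]; omega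
        have hk := key A (B.erase j) hsub j (Finset.notMem_erase j B)
        rw [Finset.insert_erase hjB] at hk
        have := h2 j hjA
        have := ih (B.erase j) hsub hcard
        linarith
    intro B hAB
    exact main _ B hAB rfl
  · have main : ∀ n (C : Finset V), C ⊆ A → (A \ C).card = n → f A ≥ f C := by
      intro n
      induction n with
      | zero =>
        intro C hCA h0
        have : A = C :=
          Finset.Subset.antisymm
            (Finset.sdiff_eq_empty_iff_subset.mp (Finset.card_eq_zero.mp h0)) hCA
        simp [this]
      | succ n ih =>
        intro C hCA hc
        obtain ⟨j, hj⟩ : (A \ C).Nonempty := Finset.card_pos.mp (by omega)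
        have hjA : j ∈ A := (Finset.mem_sdiff.mp hj).1
        have hjC : j ∉ C := (Finset.mem_sdiff.mp hj).2
        have hsub : C ⊆ A.erase j := fun x hx =>
          Finset.mem_erase.mpr ⟨fun h => hjC (h ▸ hx), hCA hx⟩
        have hsub2 : insert j C ⊆ A := Finset.insert_subset hjA hCA
        have hcard : (A \ insert j C).card = n := by
          have : A \ insert j C = (A \ C).erase j := by
            ext x
            simp only [Finset.mem_sdiff, Finset.mem_erase, Finset.mem_insert]
            tauto
          rw [this, Finset.card_erase_of_mem hj, hc]; omega
        have hk := key C (A.erase j) hsub j (Finset.notMem_erase j A)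
        have := h1 j hjA
        have := ih (insert j C) hsub2 hcard
        linarith
    intro C hCA
    exact main _ C hCA rfl
end

section
/- Let f be a nonnegative submodular function on a finite ground set V (f(X) ≥ 0 for all X ⊆ V), and let A ⊆ V satisfy f(j | A \ {j}) ≥ 0 for all j ∈ A and f(j | A) ≤ 0 for all j ∉ A. Then max(f(A), f(V \ A)) ≥ (1/3)·max_{X ⊆ V} f(X), i.e., 3·max(f(A), f(V \ A)) ≥ f(X) for every X ⊆ V. -/
/-- For nonnegative submodular `f`, if `A` is a lattice local maximum
(in the sense `f(j | A \ {j}) ≥ 0` for `j ∈ A` and `f(j | A) ≤ 0` for `j ∉ A`), then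
`max(f(A), f(V \ A)) ≥ (1/3)·max_X f(X)`. -/
theorem local_max_one_third_approximation
    {V : Type*} [Fintype V] [DecidableEq V]
    (f : Finset V → ℝ)
    (hf : ∀ S T : Finset V, f S + f T ≥ f (S ∪ T) + f (S ∩ T))
    (hfnn : ∀ X : Finset V, f X ≥ 0)
    (A : Finset V)
    (h1 : ∀ j ∈ A, f (insert j (A.erase j)) - f (A.erase j) ≥ 0)
    (h2 : ∀ j ∉ A, f (insert j A) - f A ≤ 0) :
    ∀ X : Finset V, 3 * max (f A) (f (Finset.univ \ A)) ≥ f X := by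
  -- Claim 1: for B ⊆ A, f B ≤ f A
  have claim1 : ∀ n : ℕ, ∀ B : Finset V, B ⊆ A → (A \ B).card = n → f B ≤ f A := by
    intro n
    induction n with
    | zero =>
      intro B hB hc
      have : A \ B = ∅ := Finset.card_eq_zero.mp hc
      have hAB : A ⊆ B := fun x hx => by
        by_contra hxB
        exact absurd (Finset.mem_sdiff.mpr ⟨hx, hxB⟩) (by simp [this])
      rw [Finset.Subset.antisymm hB hAB]
    | succ n ih =>
      intro B hB hc
      obtain ⟨j, hj⟩ : (A \ B).Nonempty := Finset.card_pos.mp (by omega)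
      have hjA : j ∈ A := (Finset.mem_sdiff.mp hj).1
      have hjB : j ∉ B := (Finset.mem_sdiff.mp hj).2
      have hB' : insert j B ⊆ A := Finset.insert_subset hjA hB
      have hc' : (A \ insert j B).card = n := by
        have : A \ insert j B = (A \ B).erase j := by
          ext x; simp [Finset.mem_sdiff, Finset.mem_erase]; tauto
        rw [this, Finset.card_erase_of_mem hj, hc]; omega
      have step : f B ≤ f (insert j B) := by
        have hs := hf (insert j B) (A.erase j)
        have hu : insert j B ∪ A.erase j = A := by
          apply Finset.Subset.antisymm
          · intro x hx
            rcases Finset.mem_union.mp hx with h | h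
            · exact hB' h
            · exact Finset.mem_of_mem_erase h
          · intro x hx
            by_cases hxj : x = j
            · exact Finset.mem_union.mpr (Or.inl (by simp [hxj]))
            · exact Finset.mem_union.mpr (Or.inr (Finset.mem_erase.mpr ⟨hxj, hx⟩))
        have hi : insert j B ∩ A.erase j = B := by
          ext x
          simp only [Finset.mem_inter, Finset.mem_insert, Finset.mem_erase]
          constructor
          · rintro ⟨h | h, hne, _⟩
            · exact absurd h hne
            · exact h
          · intro hx
            refine ⟨Or.inr hx, fun h => hjB (h ▸ hx), hB hx⟩
        rw [hu, hi] at hs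
        have := h1 j hjA
        rw [Finset.insert_erase hjA] at this
        linarith
      exact le_trans step (ih (insert j B) hB' hc')
  -- Claim 2: for A ⊆ B, f B ≤ f A
  have claim2 : ∀ n : ℕ, ∀ B : Finset V, A ⊆ B → (B \ A).card = n → f B ≤ f A := by
    intro n
    induction n with
    | zero =>
      intro B hB hc
      have : B \ A = ∅ := Finset.card_eq_zero.mp hc
      have hBA : B ⊆ A := fun x hx => by
        by_contra hxA
        exact absurd (Finset.mem_sdiff.mpr ⟨hx, hxA⟩) (by simp [this])
      rw [Finset.Subset.antisymm hBA hB]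
    | succ n ih =>
      intro B hB hc
      obtain ⟨j, hj⟩ : (B \ A).Nonempty := Finset.card_pos.mp (by omega)
      have hjB : j ∈ B := (Finset.mem_sdiff.mp hj).1
      have hjA : j ∉ A := (Finset.mem_sdiff.mp hj).2
      have hB' : A ⊆ B.erase j := fun x hx =>
        Finset.mem_erase.mpr ⟨fun h => hjA (h ▸ hx), hB hx⟩
      have hc' : (B.erase j \ A).card = n := by
        have : B.erase j \ A = (B \ A).erase j := by
          ext x; simp [Finset.mem_sdiff, Finset.mem_erase]; tauto
        rw [this, Finset.card_erase_of_mem hj, hc]; omega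
      have step : f B ≤ f (B.erase j) := by
        have hs := hf (insert j A) (B.erase j)
        have hu : insert j A ∪ B.erase j = B := by
          apply Finset.Subset.antisymm
          · intro x hx
            rcases Finset.mem_union.mp hx with h | h
            · rcases Finset.mem_insert.mp h with h | h
              · exact h ▸ hjB
              · exact hB h
            · exact Finset.mem_of_mem_erase h
          · intro x hx
            by_cases hxj : x = j
            · exact Finset.mem_union.mpr (Or.inl (by simp [hxj]))
            · exact Finset.mem_union.mpr (Or.inr (Finset.mem_erase.mpr ⟨hxj, hx⟩))
        have hi : insert j A ∩ B.erase j = A := by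
          ext x
          simp only [Finset.mem_inter, Finset.mem_insert, Finset.mem_erase]
          constructor
          · rintro ⟨h | h, hne, _⟩
            · exact absurd h hne
            · exact h
          · intro hx
            refine ⟨Or.inr hx, fun h => hjA (h ▸ hx), hB hx⟩
        rw [hu, hi] at hs
        have := h2 j hjA
        linarith
      exact le_trans step (ih (B.erase j) hB' hc')
  intro X
  have hAX1 : f (A ∪ X) ≤ f A := claim2 _ (A ∪ X) Finset.subset_union_left rfl
  have hAX2 : f (A ∩ X) ≤ f A := claim1 _ (A ∩ X) Finset.inter_subset_left rfl
  -- f (A∪X) + f (univ \ A) ≥ f (X \ A)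
  have s1 := hf (A ∪ X) (Finset.univ \ A)
  have hu1 : (A ∪ X) ∪ (Finset.univ \ A) = Finset.univ := by
    apply Finset.eq_univ_of_forall
    intro x
    by_cases hx : x ∈ A
    · exact Finset.mem_union.mpr (Or.inl (Finset.mem_union.mpr (Or.inl hx)))
    · exact Finset.mem_union.mpr (Or.inr (Finset.mem_sdiff.mpr ⟨Finset.mem_univ x, hx⟩))
  have hi1 : (A ∪ X) ∩ (Finset.univ \ A) = X \ A := by
    ext x; simp [Finset.mem_sdiff, Finset.mem_inter, Finset.mem_union]; tauto
  rw [hu1, hi1] at s1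
  -- f (A∩X) + f (X\A) ≥ f X
  have s2 := hf (A ∩ X) (X \ A)
  have hu2 : (A ∩ X) ∪ (X \ A) = X := by
    ext x; simp [Finset.mem_sdiff, Finset.mem_inter, Finset.mem_union]; tauto
  have hi2 : (A ∩ X) ∩ (X \ A) = ∅ := by
    ext x; simp [Finset.mem_sdiff, Finset.mem_inter]; tauto
  rw [hu2, hi2] at s2
  have hmax1 : f A ≤ max (f A) (f (Finset.univ \ A)) := le_max_left _ _
  have hmax2 : f (Finset.univ \ A) ≤ max (f A) (f (Finset.univ \ A)) := le_max_right _ _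
  have h0 : f ∅ ≥ 0 := hfnn ∅
  have hU : f Finset.univ ≥ 0 := hfnn Finset.univ
  linarith
end

section
/- Let f be a submodular function on a finite ground set V. A set A ⊆ V is a global minimizer of f (f(A) ≤ f(Y) for all Y ⊆ V) if and only if f(A) ≤ f(B) for all B ⊆ A and f(A) ≤ f(B) for all B with A ⊆ B ⊆ V. -/
/-- A set `A` minimizes a submodular function `f` iff `f(A) ≤ f(B)` for all
`B ⊆ A` and all `B ⊇ A`. -/
theorem submodular_min_iff_lattice_local_min
    {V : Type*} [Fintype V] [DecidableEq V]
    (f : Finset V → ℝ)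
    (hf : ∀ S T : Finset V, f S + f T ≥ f (S ∪ T) + f (S ∩ T))
    (A : Finset V) :
    (∀ Y : Finset V, f A ≤ f Y) ↔
      ((∀ B ⊆ A, f A ≤ f B) ∧ (∀ B : Finset V, A ⊆ B → f A ≤ f B)) := by
  constructor
  · intro h
    exact ⟨fun B _ => h B, fun B _ => h B⟩
  · rintro ⟨hdown, hup⟩ Y
    have h1 : f A ≤ f (A ∩ Y) := hdown _ (Finset.inter_subset_left)
    have h2 : f A ≤ f (A ∪ Y) := hup _ (Finset.subset_union_left)
    have := hf A Y
    linarith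
end

section
/- Let f be a submodular function on a finite ground set V = {1, ..., n} with f(∅) = 0, and let σ be a permutation (bijective ordering) of V. Define the chain S^σ_0 = ∅ and S^σ_i = {σ(1), ..., σ(i)} for 1 ≤ i ≤ n, and define the vector h^σ ∈ ℝ^V by h^σ(σ(i)) = f(S^σ_i) − f(S^σ_{i−1}). Then h^σ lies in the base polytope of f: h^σ(S) ≤ f(S) for every S ⊆ V, and h^σ(V) = f(V). -/
/-- Greedy extreme points: for any permutation `σ` of `V = Fin n`, the
greedy vector `h^σ` defined via the chain `S^σ_i = {σ(0), …, σ(i−1)}` lies in the base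
polytope of `f`. -/
theorem greedy_vector_mem_base_polytope
    {n : ℕ} (f : Finset (Fin n) → ℝ)
    (hf : ∀ S T : Finset (Fin n), f S + f T ≥ f (S ∪ T) + f (S ∩ T))
    (hf0 : f ∅ = 0) (σ : Equiv.Perm (Fin n))
    (S : ℕ → Finset (Fin n))
    (hS : ∀ i : ℕ, S i = Finset.univ.filter (fun j => (σ.symm j : ℕ) < i))
    (h : Fin n → ℝ)
    (hh : ∀ j : Fin n, h j = f (S ((σ.symm j : ℕ) + 1)) - f (S ((σ.symm j : ℕ)))) :
    (∀ T : Finset (Fin n), (∑ i ∈ T, h i) ≤ f T) ∧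
      (∑ i ∈ (Finset.univ : Finset (Fin n)), h i) = f Finset.univ := by
  have hmem : ∀ (i : ℕ) (j : Fin n), j ∈ S i ↔ (σ.symm j : ℕ) < i := by
    intro i j; rw [hS]; simp
  constructor
  · intro T
    induction T using Finset.strongInduction with
    | _ T ih =>
      rcases T.eq_empty_or_nonempty with rfl | hne
      · simp [hf0]
      · obtain ⟨j, hjT, hjmax⟩ := T.exists_max_image (fun j => (σ.symm j : ℕ)) hne
        set k := (σ.symm j : ℕ) with hk
        have hUnion : T ∪ S k = S (k + 1) := by
          ext x
          simp only [Finset.mem_union, hmem]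
          constructor
          · rintro (hx | hx)
            · exact Nat.lt_succ_of_le (hjmax x hx)
            · exact Nat.lt_succ_of_lt hx
          · intro hx
            rcases Nat.lt_succ_iff_lt_or_eq.mp hx with hx | hx
            · exact Or.inr hx
            · left
              have : σ.symm x = σ.symm j := Fin.ext (by simpa [hk] using hx)
              have : x = j := σ.symm.injective this
              exact this ▸ hjT
        have hInter : T ∩ S k = T.erase j := by
          ext x
          simp only [Finset.mem_inter, Finset.mem_erase, hmem]
          constructor
          · rintro ⟨hxT, hxk⟩
            refine ⟨fun hxj => ?_, hxT⟩
            exact absurd hxk (by simp [hxj, hk])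
          · rintro ⟨hxj, hxT⟩
            refine ⟨hxT, lt_of_le_of_ne (hjmax x hxT) fun hx => ?_⟩
            exact hxj (σ.symm.injective (Fin.ext (by simpa [hk] using hx)))
        have hsub := hf T (S k)
        rw [hUnion, hInter] at hsub
        have ihe := ih (T.erase j) (Finset.erase_ssubset hjT)
        have hsum : (∑ i ∈ T, h i) = h j + ∑ i ∈ T.erase j, h i :=
          (Finset.add_sum_erase T h hjT).symm
        rw [hsum, hh j]
        linarith
  · have h1 : (∑ j : Fin n, h j) = ∑ j : Fin n, (f (S ((σ.symm j : ℕ) + 1)) - f (S (σ.symm j : ℕ))) := by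
      exact Finset.sum_congr rfl fun j _ => hh j
    have h2 : (∑ j : Fin n, (f (S ((σ.symm j : ℕ) + 1)) - f (S (σ.symm j : ℕ))))
        = ∑ k : Fin n, (f (S ((k : ℕ) + 1)) - f (S (k : ℕ))) :=
      Equiv.sum_comp σ.symm (fun k : Fin n => f (S ((k : ℕ) + 1)) - f (S (k : ℕ)))
    have h3 : (∑ k : Fin n, (f (S ((k : ℕ) + 1)) - f (S (k : ℕ))))
        = ∑ k ∈ Finset.range n, (f (S (k + 1)) - f (S k)) :=
      Fin.sum_univ_eq_sum_range (fun k => f (S (k + 1)) - f (S k)) n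
    have h4 : (∑ k ∈ Finset.range n, (f (S (k + 1)) - f (S k))) = f (S n) - f (S 0) :=
      Finset.sum_range_sub (fun k => f (S k)) n
    have hS0 : S 0 = ∅ := by rw [hS]; simp
    have hSn : S n = Finset.univ := by
      rw [hS]; exact Finset.filter_true_of_mem fun j _ => (σ.symm j).isLt
    rw [h1, h2, h3, h4, hS0, hSn, hf0, sub_zero]
end
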